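/- arXiv:1704.04589 — 2 statements merged into one kernel-verified Lean document; each statement's English description precedes it below -/
import Mathlib

section
/- Let C be a cycle in the grid graph ℤ² whose interior contains at least two unit squares, and let J₀ be the square in the interior of C whose center (x₀,y₀) is lexicographically maximal (first maximizing y₀, then x₀). Then the top edge and the right edge of J₀ both belong to C, while at least one of the left or bottom edges of J₀ does not belong to C. -/
/-!
If the top (right) edge of the lexicographically maximal interior square `q₀` were missing
from `C`, the open domino formed by `q₀` and the square above it (to its right) would miss `C`;
being connected it would carry interiority to that neighbour, contradicting maximality. If all
four edges of `q₀` lay on `C`, then every corner of `q₀` would already have its two `C`-neighbours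
among the corners, so `C` would be the boundary of `q₀`; a ray leaving the convex square `q₀`
through any other square then escapes to infinity inside the complement of `C`, so `q₀` would
be the only interior square.
-/

open Set

/-- The closed unit square with lower-left corner `q` of the standard tiling. -/
def unitSquare (q : ℤ × ℤ) : Set (ℝ × ℝ) :=
  Icc (q.1 : ℝ) (q.1 + 1) ×ˢ Icc (q.2 : ℝ) (q.2 + 1)

/-- The open interior of the unit square `q`. -/
def openSquare (q : ℤ × ℤ) : Set (ℝ × ℝ) :=
  Ioo (q.1 : ℝ) (q.1 + 1) ×ˢ Ioo (q.2 : ℝ) (q.2 + 1)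

/-- The four corner points of the unit square `q`. -/
def cornerSet (q : ℤ × ℤ) : Set (ℝ × ℝ) :=
  {((q.1 : ℝ), (q.2 : ℝ)), ((q.1 : ℝ) + 1, (q.2 : ℝ)),
   ((q.1 : ℝ), (q.2 : ℝ) + 1), ((q.1 : ℝ) + 1, (q.2 : ℝ) + 1)}

/-- The four closed boundary edges of the unit square `q`, as subsets of `ℝ × ℝ`. -/
def squareEdgeSets (q : ℤ × ℤ) : Set (Set (ℝ × ℝ)) :=
  { Icc (q.1 : ℝ) (q.1 + 1) ×ˢ ({(q.2 : ℝ)} : Set ℝ),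
    Icc (q.1 : ℝ) (q.1 + 1) ×ˢ ({(q.2 : ℝ) + 1} : Set ℝ),
    ({(q.1 : ℝ)} : Set ℝ) ×ˢ Icc (q.2 : ℝ) (q.2 + 1),
    ({(q.1 : ℝ) + 1} : Set ℝ) ×ˢ Icc (q.2 : ℝ) (q.2 + 1) }

/-- Two distinct squares are star adjacent if they share a corner. -/
def StarAdj (p q : ℤ × ℤ) : Prop := p ≠ q ∧ (cornerSet p ∩ cornerSet q).Nonempty

/-- Two distinct squares are plus adjacent if they share a full edge. -/
def PlusAdj (p q : ℤ × ℤ) : Prop := p ≠ q ∧ (squareEdgeSets p ∩ squareEdgeSets q).Nonempty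

/-- The grid graph on `ℤ × ℤ`: edges between lattice points at distance 1. -/
def gridGraph : SimpleGraph (ℤ × ℤ) where
  Adj p q := |p.1 - q.1| + |p.2 - q.2| = 1
  symm := by
    constructor
    intro p q h
    show |q.1 - p.1| + |q.2 - p.2| = 1
    rw [abs_sub_comm q.1, abs_sub_comm q.2]
    exact h
  loopless := by
    constructor
    intro p h
    simp at h

/-- Embedding of lattice points into the plane. -/
def toR (p : ℤ × ℤ) : ℝ × ℝ := ((p.1 : ℝ), (p.2 : ℝ))

/-- The subset of the plane traced out by a closed walk in the grid graph. -/
def cycleSet {v : ℤ × ℤ} (w : gridGraph.Walk v v) : Set (ℝ × ℝ) :=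
  ⋃ d ∈ w.darts, segment ℝ (toR d.toProd.1) (toR d.toProd.2)

/-- The interior of a curve `Γ`: points off `Γ` whose connected component
of the complement is bounded. -/
def interiorPts (Γ : Set (ℝ × ℝ)) : Set (ℝ × ℝ) :=
  {x | x ∉ Γ ∧ Bornology.IsBounded (connectedComponentIn Γᶜ x)}

/-- The exterior of a curve `Γ`: points off `Γ` whose connected component
of the complement is unbounded. -/
def exteriorPts (Γ : Set (ℝ × ℝ)) : Set (ℝ × ℝ) :=
  {x | x ∉ Γ ∧ ¬ Bornology.IsBounded (connectedComponentIn Γᶜ x)}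

/-- A square lies in the interior of a curve if its open interior does. -/
def SquareInInterior (Γ : Set (ℝ × ℝ)) (q : ℤ × ℤ) : Prop := openSquare q ⊆ interiorPts Γ

/-- A square lies in the exterior of a curve if its open interior does. -/
def SquareInExterior (Γ : Set (ℝ × ℝ)) (q : ℤ × ℤ) : Prop := openSquare q ⊆ exteriorPts Γ

/-- The four boundary edges of the square `q`, as edges (`Sym2`) of the grid graph. -/
def sqEdgeSyms (q : ℤ × ℤ) : Set (Sym2 (ℤ × ℤ)) :=
  { s((q.1, q.2), (q.1 + 1, q.2)),
    s((q.1, q.2), (q.1, q.2 + 1)),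
    s((q.1 + 1, q.2), (q.1 + 1, q.2 + 1)),
    s((q.1, q.2 + 1), (q.1 + 1, q.2 + 1)) }

/-- A cycle in the graph `G₀` of edges of the squares of `Λ`. -/
def CycleInG0 (Λ : Set (ℤ × ℤ)) {v : ℤ × ℤ} (w : gridGraph.Walk v v) : Prop :=
  w.IsCycle ∧ ∀ e ∈ w.edges, ∃ q ∈ Λ, e ∈ sqEdgeSyms q

/-- An outermost boundary edge of the component formed by the squares of `Λ`. -/
def OutermostBoundaryEdge (Λ : Set (ℤ × ℤ)) (e : Sym2 (ℤ × ℤ)) : Prop :=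
  (∃ q ∈ Λ, e ∈ sqEdgeSyms q) ∧
  ∀ (v : ℤ × ℤ) (w : gridGraph.Walk v v), CycleInG0 Λ w →
    e ∈ w.edges ∨ ∀ q : ℤ × ℤ, e ∈ sqEdgeSyms q → SquareInExterior (cycleSet w) q

namespace SimpleGraph.Walk

variable {V : Type*} {G : SimpleGraph V}

lemma IsCycle.eq_or_eq_of_mem_edges {v u a b c : V} {w : G.Walk v v} (hw : w.IsCycle)
    (ha : s(u, a) ∈ w.edges) (hb : s(u, b) ∈ w.edges) (hab : a ≠ b) (hc : s(u, c) ∈ w.edges) :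
    c = a ∨ c = b := by
  have hN : {a, b} = w.toSubgraph.neighborSet u := by
    refine Set.eq_of_subset_of_ncard_le ?_ ?_ w.finite_neighborSet_toSubgraph
    · exact Set.insert_subset (adj_toSubgraph_iff_mem_edges.mpr ha)
        (Set.singleton_subset_iff.mpr (adj_toSubgraph_iff_mem_edges.mpr hb))
    · rw [hw.ncard_neighborSet_toSubgraph_eq_two (w.fst_mem_support_of_mem_edges ha),
        Set.ncard_pair hab]
  have hc' : c ∈ w.toSubgraph.neighborSet u := adj_toSubgraph_iff_mem_edges.mpr hc
  simpa [← hN] using hc'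

lemma forall_mem_support_of_edges_closed {u v : V} (p : G.Walk u v) {S : Set V}
    (hS : ∀ x ∈ S, ∀ y, s(x, y) ∈ p.edges → y ∈ S) {x : V} (hx : x ∈ S) (hxp : x ∈ p.support) :
    ∀ y ∈ p.support, y ∈ S := by
  induction p generalizing x with
  | nil =>
    simp_all
  | @cons u u' _ h p ih =>
    have hS' : ∀ x ∈ S, ∀ y, s(x, y) ∈ p.edges → y ∈ S := fun x hx y hy =>
      hS x hx y (List.mem_cons_of_mem _ hy)
    have hedge : s(u, u') ∈ (cons h p).edges := List.mem_cons_self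
    have hp : ∀ y ∈ p.support, y ∈ S := by
      rcases List.mem_cons.mp hxp with rfl | hxp
      · exact ih hS' (hS _ hx _ hedge) p.start_mem_support
      · exact ih hS' hx hxp
    have hu : u ∈ S := hS u' (hp _ p.start_mem_support) u (Sym2.eq_swap ▸ hedge)
    intro y hy
    rcases List.mem_cons.mp hy with rfl | hy
    · exact hu
    · exact hp y hy

lemma IsCycle.forall_mem_support_of_two_neighbors {v : V} {w : G.Walk v v} (hw : w.IsCycle)
    {S : Set V} (hS : ∀ x ∈ S, ∃ a ∈ S, ∃ b ∈ S, a ≠ b ∧ s(x, a) ∈ w.edges ∧ s(x, b) ∈ w.edges)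
    {x : V} (hx : x ∈ S) : ∀ y ∈ w.support, y ∈ S := by
  obtain ⟨a, -, b, -, -, ha, -⟩ := hS x hx
  refine w.forall_mem_support_of_edges_closed (fun x hx y hy => ?_) hx
    (w.fst_mem_support_of_mem_edges ha)
  obtain ⟨a, ha, b, hb, hab, hxa, hxb⟩ := hS x hx
  rcases hw.eq_or_eq_of_mem_edges hxa hxb hab hy with rfl | rfl
  exacts [ha, hb]

end SimpleGraph.Walk

lemma Int.le_and_add_one_le_of_mem_uIcc {m n a : ℤ} {t : ℝ} (ht : t ∈ uIcc (m : ℝ) n)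
    (h₁ : (a : ℝ) < t) (h₂ : t < a + 1) : (m ≤ a ∧ a + 1 ≤ n) ∨ (n ≤ a ∧ a + 1 ≤ m) := by
  have below : ∀ {k : ℤ}, (k : ℝ) ≤ t → k ≤ a := fun {k} hk => by
    have : (k : ℝ) < a + 1 := by linarith
    exact Int.lt_add_one_iff.mp (by exact_mod_cast this)
  have above : ∀ {k : ℤ}, t ≤ k → a + 1 ≤ k := fun {k} hk => by
    have : (a : ℝ) < k := by linarith
    exact_mod_cast this
  rcases mem_uIcc.mp ht with ⟨hm, hn⟩ | ⟨hn, hm⟩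
  exacts [.inl ⟨below hm, above hn⟩, .inr ⟨below hn, above hm⟩]

lemma segment_toR_subset (p q : ℤ × ℤ) :
    segment ℝ (toR p) (toR q) ⊆ uIcc (p.1 : ℝ) q.1 ×ˢ uIcc (p.2 : ℝ) q.2 := by
  have h := Prod.segment_subset (𝕜 := ℝ) (toR p) (toR q)
  rwa [segment_eq_uIcc, segment_eq_uIcc] at h

lemma exists_horizontal_of_mem_segment {p q : ℤ × ℤ} (hpq : gridGraph.Adj p q) {x : ℝ × ℝ}
    (hx : x ∈ segment ℝ (toR p) (toR q)) {a : ℤ} (h₁ : (a : ℝ) < x.1) (h₂ : x.1 < a + 1) :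
    ∃ m : ℤ, x.2 = m ∧ s(p, q) = s((a, m), (a + 1, m)) := by
  have hpq : |p.1 - q.1| + |p.2 - q.2| = 1 := hpq
  obtain ⟨hx₁, hx₂⟩ := segment_toR_subset p q hx
  have hspan := Int.le_and_add_one_le_of_mem_uIcc hx₁ h₁ h₂
  have hp₂ : p.2 = q.2 := by
    rcases hspan with h | h <;>
      cases abs_cases (p.1 - q.1) <;> cases abs_cases (p.2 - q.2) <;> omega
  rw [← hp₂, uIcc_self, mem_singleton_iff] at hx₂
  refine ⟨p.2, hx₂, ?_⟩
  rw [Sym2.eq_iff]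
  rcases hspan with h | h <;> [left; right] <;>
    refine ⟨Prod.ext ?_ ?_, Prod.ext ?_ ?_⟩ <;> dsimp only <;>
    cases abs_cases (p.1 - q.1) <;> cases abs_cases (p.2 - q.2) <;> omega

lemma exists_vertical_of_mem_segment {p q : ℤ × ℤ} (hpq : gridGraph.Adj p q) {x : ℝ × ℝ}
    (hx : x ∈ segment ℝ (toR p) (toR q)) {b : ℤ} (h₁ : (b : ℝ) < x.2) (h₂ : x.2 < b + 1) :
    ∃ m : ℤ, x.1 = m ∧ s(p, q) = s((m, b), (m, b + 1)) := by
  have hpq : |p.1 - q.1| + |p.2 - q.2| = 1 := hpq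
  obtain ⟨hx₁, hx₂⟩ := segment_toR_subset p q hx
  have hspan := Int.le_and_add_one_le_of_mem_uIcc hx₂ h₁ h₂
  have hp₁ : p.1 = q.1 := by
    rcases hspan with h | h <;>
      cases abs_cases (p.1 - q.1) <;> cases abs_cases (p.2 - q.2) <;> omega
  rw [← hp₁, uIcc_self, mem_singleton_iff] at hx₁
  refine ⟨p.1, hx₁, ?_⟩
  rw [Sym2.eq_iff]
  rcases hspan with h | h <;> [left; right] <;>
    refine ⟨Prod.ext ?_ ?_, Prod.ext ?_ ?_⟩ <;> dsimp only <;>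
    cases abs_cases (p.1 - q.1) <;> cases abs_cases (p.2 - q.2) <;> omega

lemma IsPreconnected.subset_interiorPts {Γ D : Set (ℝ × ℝ)} (hD : IsPreconnected D)
    (hDΓ : D ⊆ Γᶜ) {x : ℝ × ℝ} (hxD : x ∈ D) (hx : x ∈ interiorPts Γ) :
    D ⊆ interiorPts Γ := fun _ hy =>
  ⟨hDΓ hy, connectedComponentIn_eq (hD.subset_connectedComponentIn hxD hDΓ hy) ▸ hx.2⟩

lemma openSquare_nonempty (q : ℤ × ℤ) : (openSquare q).Nonempty :=
  (nonempty_Ioo.2 (lt_add_one _)).prod (nonempty_Ioo.2 (lt_add_one _))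

lemma SquareInInterior.of_isPreconnected {Γ D : Set (ℝ × ℝ)} {q q' : ℤ × ℤ}
    (hq : SquareInInterior Γ q) (hD : IsPreconnected D) (hDΓ : D ⊆ Γᶜ)
    (hqD : openSquare q ⊆ D) (hq'D : openSquare q' ⊆ D) : SquareInInterior Γ q' := by
  obtain ⟨x, hx⟩ := openSquare_nonempty q
  exact hq'D.trans (hD.subset_interiorPts hDΓ (hqD hx) (hq hx))

lemma not_isBounded_ray {E : Type*} [NormedAddCommGroup E] [NormedSpace ℝ E] (z : E) {u : E}
    (hu : u ≠ 0) : ¬ Bornology.IsBounded ((fun t : ℝ => z + t • u) '' Ici 0) := by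
  rw [isBounded_iff_forall_norm_le]
  rintro ⟨M, hM⟩
  have hz : ‖z‖ ≤ M := by simpa using hM z ⟨0, self_mem_Ici, by simp⟩
  set t := (M + ‖z‖ + 1) / ‖u‖
  have ht : 0 ≤ t := div_nonneg (by linarith [norm_nonneg z]) (norm_nonneg u)
  have htu : ‖t • u‖ = M + ‖z‖ + 1 := by
    rw [norm_smul, Real.norm_of_nonneg ht, div_mul_cancel₀ _ (norm_ne_zero_iff.2 hu)]
  have hle : ‖t • u‖ ≤ ‖z + t • u‖ + ‖z‖ := by simpa using norm_sub_le (z + t • u) z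
  linarith [hM _ ⟨t, ht, rfl⟩]

lemma Convex.add_smul_sub_notMem {E : Type*} [AddCommGroup E] [Module ℝ E] {K : Set E}
    (hK : Convex ℝ K) {c z : E} (hc : c ∈ K) (hz : z ∉ K) {t : ℝ} (ht : 0 ≤ t) :
    z + t • (z - c) ∉ K := by
  intro h
  have ht' : 1 + t ≠ 0 := by positivity
  -- `z` lies on the segment from `c` to `z + t • (z - c)`, at parameter `(1 + t)⁻¹`
  refine hz ?_
  convert hK.add_smul_sub_mem hc h (t := (1 + t)⁻¹) ⟨inv_nonneg.2 (by positivity),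
    inv_le_one_of_one_le₀ (by linarith)⟩ using 1
  rw [show z + t • (z - c) - c = (1 + t) • (z - c) by module, smul_smul, inv_mul_cancel₀ ht',
    one_smul, add_sub_cancel]

lemma notMem_interiorPts_of_subset_convex {Γ K : Set (ℝ × ℝ)} (hK : Convex ℝ K) (hΓK : Γ ⊆ K)
    {c z : ℝ × ℝ} (hc : c ∈ K) (hz : z ∉ K) : z ∉ interiorPts Γ := by
  rintro ⟨-, hbdd⟩
  set ray := (fun t : ℝ => z + t • (z - c)) '' Ici 0
  have hray : ray ⊆ Γᶜ := by
    rintro _ ⟨t, ht, rfl⟩ hΓ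
    exact hK.add_smul_sub_notMem hc hz ht (hΓK hΓ)
  have hconn : IsPreconnected ray :=
    isPreconnected_Ici.image _
      (by fun_prop : Continuous fun t : ℝ => z + t • (z - c)).continuousOn
  have hzray : z ∈ ray := ⟨0, self_mem_Ici, by simp⟩
  exact not_isBounded_ray z (sub_ne_zero.2 (ne_of_mem_of_not_mem hc hz).symm)
    (hbdd.subset (hconn.subset_connectedComponentIn hzray hray))

lemma disjoint_openSquare_unitSquare {q q' : ℤ × ℤ} (h : q ≠ q') :
    Disjoint (openSquare q) (unitSquare q') := by
  have key : ∀ {m n : ℤ} {t : ℝ}, t ∈ Ioo (m : ℝ) (m + 1) → t ∈ Icc (n : ℝ) (n + 1) →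
      m = n := by
    intro m n t hm hn
    have h₁ : (m : ℝ) < n + 1 := by linarith [hm.1, hn.2]
    have h₂ : (n : ℝ) < m + 1 := by linarith [hm.2, hn.1]
    have h₁ : m < n + 1 := by exact_mod_cast h₁
    have h₂ : n < m + 1 := by exact_mod_cast h₂
    omega
  rw [disjoint_left]
  rintro x ⟨hx₁, hx₂⟩ ⟨hx₁', hx₂'⟩
  exact h (Prod.ext (key hx₁ hx₁') (key hx₂ hx₂'))

lemma not_squareInInterior_of_subset_unitSquare {Γ : Set (ℝ × ℝ)} {q₀ q : ℤ × ℤ}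
    (hΓ : Γ ⊆ unitSquare q₀) (hq : q ≠ q₀) : ¬ SquareInInterior Γ q := by
  intro hin
  obtain ⟨z, hz⟩ := openSquare_nonempty q
  have hcorner : toR q₀ ∈ unitSquare q₀ := by simp [toR, unitSquare]
  exact notMem_interiorPts_of_subset_convex ((convex_Icc _ _).prod (convex_Icc _ _)) hΓ hcorner
    ((disjoint_openSquare_unitSquare hq).notMem_of_mem_left hz) (hin hz)

section CycleSet

variable {v : ℤ × ℤ} {w : gridGraph.Walk v v}

lemma mem_cycleSet {x : ℝ × ℝ} :
    x ∈ cycleSet w ↔ ∃ d ∈ w.darts, x ∈ segment ℝ (toR d.fst) (toR d.snd) := by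
  simp [cycleSet]

lemma exists_horizontal_edge_of_mem_cycleSet {x : ℝ × ℝ} (hx : x ∈ cycleSet w) {a : ℤ}
    (h₁ : (a : ℝ) < x.1) (h₂ : x.1 < a + 1) :
    ∃ m : ℤ, x.2 = m ∧ s((a, m), (a + 1, m)) ∈ w.edges := by
  obtain ⟨d, hd, hxd⟩ := mem_cycleSet.mp hx
  obtain ⟨m, hm, hdm⟩ := exists_horizontal_of_mem_segment d.adj hxd h₁ h₂
  exact ⟨m, hm, hdm ▸ List.mem_map_of_mem hd⟩

lemma exists_vertical_edge_of_mem_cycleSet {x : ℝ × ℝ} (hx : x ∈ cycleSet w) {b : ℤ}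
    (h₁ : (b : ℝ) < x.2) (h₂ : x.2 < b + 1) :
    ∃ m : ℤ, x.1 = m ∧ s((m, b), (m, b + 1)) ∈ w.edges := by
  obtain ⟨d, hd, hxd⟩ := mem_cycleSet.mp hx
  obtain ⟨m, hm, hdm⟩ := exists_vertical_of_mem_segment d.adj hxd h₁ h₂
  exact ⟨m, hm, hdm ▸ List.mem_map_of_mem hd⟩

lemma SquareInInterior.above {q : ℤ × ℤ} (hq : SquareInInterior (cycleSet w) q)
    (htop : s((q.1, q.2 + 1), (q.1 + 1, q.2 + 1)) ∉ w.edges) :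
    SquareInInterior (cycleSet w) (q.1, q.2 + 1) := by
  refine hq.of_isPreconnected (D := Ioo (q.1 : ℝ) (q.1 + 1) ×ˢ Ioo (q.2 : ℝ) (q.2 + 2))
    ((convex_Ioo _ _).prod (convex_Ioo _ _)).isPreconnected ?_ ?_ ?_
  · rintro x ⟨hx₁, hx₂⟩ hxΓ
    obtain ⟨m, hm, hedge⟩ := exists_horizontal_edge_of_mem_cycleSet hxΓ hx₁.1 hx₁.2
    rw [hm] at hx₂
    have hm : m = q.2 + 1 := by
      have h₁ : q.2 < m := by exact_mod_cast hx₂.1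
      have h₂ : m < q.2 + 2 := by exact_mod_cast hx₂.2
      omega
    exact htop (hm ▸ hedge)
  · exact prod_mono subset_rfl (Ioo_subset_Ioo_right (by linarith))
  · simp only [openSquare, Int.cast_add, Int.cast_one]
    exact prod_mono subset_rfl (Ioo_subset_Ioo (by linarith) (by linarith))

lemma SquareInInterior.right {q : ℤ × ℤ} (hq : SquareInInterior (cycleSet w) q)
    (hright : s((q.1 + 1, q.2), (q.1 + 1, q.2 + 1)) ∉ w.edges) :
    SquareInInterior (cycleSet w) (q.1 + 1, q.2) := by
  refine hq.of_isPreconnected (D := Ioo (q.1 : ℝ) (q.1 + 2) ×ˢ Ioo (q.2 : ℝ) (q.2 + 1))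
    ((convex_Ioo _ _).prod (convex_Ioo _ _)).isPreconnected ?_ ?_ ?_
  · rintro x ⟨hx₁, hx₂⟩ hxΓ
    obtain ⟨m, hm, hedge⟩ := exists_vertical_edge_of_mem_cycleSet hxΓ hx₂.1 hx₂.2
    rw [hm] at hx₁
    have hm : m = q.1 + 1 := by
      have h₁ : q.1 < m := by exact_mod_cast hx₁.1
      have h₂ : m < q.1 + 2 := by exact_mod_cast hx₁.2
      omega
    exact hright (hm ▸ hedge)
  · exact prod_mono (Ioo_subset_Ioo_right (by linarith)) subset_rfl
  · simp only [openSquare, Int.cast_add, Int.cast_one]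
    exact prod_mono (Ioo_subset_Ioo (by linarith) (by linarith)) subset_rfl

lemma cycleSet_subset_unitSquare (hw : w.IsCycle) {q : ℤ × ℤ}
    (hq : ∀ e ∈ sqEdgeSyms q, e ∈ w.edges) : cycleSet w ⊆ unitSquare q := by
  obtain ⟨hbot, hleft, hright, htop⟩ : s((q.1, q.2), (q.1 + 1, q.2)) ∈ w.edges ∧
      s((q.1, q.2), (q.1, q.2 + 1)) ∈ w.edges ∧
      s((q.1 + 1, q.2), (q.1 + 1, q.2 + 1)) ∈ w.edges ∧
      s((q.1, q.2 + 1), (q.1 + 1, q.2 + 1)) ∈ w.edges := by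
    refine ⟨hq _ ?_, hq _ ?_, hq _ ?_, hq _ ?_⟩ <;> simp [sqEdgeSyms]
  set corners : Set (ℤ × ℤ) :=
    {(q.1, q.2), (q.1 + 1, q.2), (q.1, q.2 + 1), (q.1 + 1, q.2 + 1)}
  have hsupport : ∀ y ∈ w.support, y ∈ corners := by
    refine hw.forall_mem_support_of_two_neighbors ?_ (x := (q.1, q.2)) (by simp [corners])
    rintro x (rfl | rfl | rfl | rfl)
    · exact ⟨_, by simp [corners], _, by simp [corners], by simp, hbot, hleft⟩
    · exact ⟨_, by simp [corners], _, by simp [corners], by simp [Prod.ext_iff],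
        Sym2.eq_swap ▸ hbot, hright⟩
    · exact ⟨_, by simp [corners], _, by simp [corners], by simp [Prod.ext_iff],
        Sym2.eq_swap ▸ hleft, htop⟩
    · exact ⟨_, by simp [corners], _, by simp [corners], by simp [Prod.ext_iff],
        Sym2.eq_swap ▸ hright, Sym2.eq_swap ▸ htop⟩
  have hcorners : ∀ y ∈ corners, toR y ∈ unitSquare q := by
    rintro y (rfl | rfl | rfl | rfl) <;> simp [toR, unitSquare]
  intro x hx
  obtain ⟨d, hd, hxd⟩ := mem_cycleSet.mp hx
  exact ((convex_Icc _ _).prod (convex_Icc _ _)).segment_subset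
    (hcorners _ (hsupport _ (w.dart_fst_mem_support_of_mem_darts hd)))
    (hcorners _ (hsupport _ (w.dart_snd_mem_support_of_mem_darts hd))) hxd

end CycleSet

theorem top_right_edges_of_lex_max_square (v : ℤ × ℤ) (w : gridGraph.Walk v v)
    (hw : w.IsCycle) (q₀ : ℤ × ℤ) (hq₀ : SquareInInterior (cycleSet w) q₀)
    (hmax : ∀ q : ℤ × ℤ, SquareInInterior (cycleSet w) q → q ≠ q₀ →
      q.2 < q₀.2 ∨ (q.2 = q₀.2 ∧ q.1 < q₀.1))
    (htwo : ∃ q : ℤ × ℤ, q ≠ q₀ ∧ SquareInInterior (cycleSet w) q) :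
    s((q₀.1, q₀.2 + 1), (q₀.1 + 1, q₀.2 + 1)) ∈ w.edges ∧
    s((q₀.1 + 1, q₀.2), (q₀.1 + 1, q₀.2 + 1)) ∈ w.edges ∧
    (s((q₀.1, q₀.2), (q₀.1, q₀.2 + 1)) ∉ w.edges ∨
     s((q₀.1, q₀.2), (q₀.1 + 1, q₀.2)) ∉ w.edges) := by
  have htop : s((q₀.1, q₀.2 + 1), (q₀.1 + 1, q₀.2 + 1)) ∈ w.edges := by
    by_contra h
    have := hmax _ (hq₀.above h) (by simp [Prod.ext_iff])
    omega
  have hright : s((q₀.1 + 1, q₀.2), (q₀.1 + 1, q₀.2 + 1)) ∈ w.edges := by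
    by_contra h
    have := hmax _ (hq₀.right h) (by simp [Prod.ext_iff])
    omega
  refine ⟨htop, hright, ?_⟩
  by_contra! hleft_bot
  obtain ⟨q, hq, hqint⟩ := htwo
  have hsquare : cycleSet w ⊆ unitSquare q₀ := by
    refine cycleSet_subset_unitSquare hw ?_
    rintro e (rfl | rfl | rfl | rfl)
    exacts [hleft_bot.2, hleft_bot.1, hright, htop]
  exact not_squareInInterior_of_subset_unitSquare hsquare hq hqint
end

section
/- Suppose every unit square with center in the lexicographic box is assigned occupied/vacant states and C⁺(0) is a finite plus connected occupied component. If P = (J₁,…,J_t) is a path of plus adjacent occupied squares of C⁺(0) and Γ is a cycle of grid edges such that every edge of Γ belongs to some vacant square, then either all squares of P lie in the interior of Γ or all lie in the exterior of Γ. -/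
open Set

/-!
Away from lattice points, the curve `Γ` traced by a grid walk meets a closed unit square only
along edges of that square that the walk uses. The squares of the path have no such edges, so
each of them, with its corners removed, avoids `Γ`. Two plus adjacent squares share a point of their
common edge that is not a corner, and through it their open interiors are joined inside the
complement of `Γ`. Hence all open squares of the path lie in a single connected component of the
complement, which is either bounded or not.
-/

lemma int_eq_of_mem_Ioo_of_mem_Icc {a n : ℤ} {s : ℝ} (ha : s ∈ Ioo (a : ℝ) (a + 1))
    (hn : s ∈ Icc (n : ℝ) (n + 1)) : a = n := by
  have h₁ : a < n + 1 := by exact_mod_cast ha.1.trans_le hn.2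
  have h₂ : n < a + 1 := by exact_mod_cast hn.1.trans_lt ha.2
  omega

lemma int_eq_or_eq_add_one_of_mem_Icc {m n : ℤ} (h : (m : ℝ) ∈ Icc (n : ℝ) (n + 1)) :
    m = n ∨ m = n + 1 := by
  have h₁ : n ≤ m := by exact_mod_cast h.1
  have h₂ : m ≤ n + 1 := by exact_mod_cast h.2
  omega

lemma intCast_notMem_Ioo (m n : ℤ) : (m : ℝ) ∉ Ioo (n : ℝ) (n + 1) := by
  rintro ⟨h₁, h₂⟩
  have h₁' : n < m := by exact_mod_cast h₁
  have h₂' : m < n + 1 := by exact_mod_cast h₂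
  omega

lemma intCast_add_half_ne_intCast (n m : ℤ) : (n : ℝ) + 2⁻¹ ≠ m := by
  intro h
  have h' : ((2 * (m - n) : ℤ) : ℝ) = 1 := by push_cast; linarith
  have : 2 * (m - n) = 1 := by exact_mod_cast h'
  omega

lemma gridGraph_adj_iff {a b : ℤ × ℤ} :
    gridGraph.Adj a b ↔ b = (a.1 + 1, a.2) ∨ b = (a.1, a.2 + 1) ∨
      a = (b.1 + 1, b.2) ∨ a = (b.1, b.2 + 1) := by
  change |a.1 - b.1| + |a.2 - b.2| = 1 ↔ _
  simp only [Prod.ext_iff]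
  rcases abs_cases (a.1 - b.1) with ⟨h₁, _⟩ | ⟨h₁, _⟩ <;>
    rcases abs_cases (a.2 - b.2) with ⟨h₂, _⟩ | ⟨h₂, _⟩ <;> omega

lemma mk_mem_sqEdgeSyms_of_mem_openSegment {a b r : ℤ × ℤ} (hab : gridGraph.Adj a b)
    {x : ℝ × ℝ} (hx : x ∈ openSegment ℝ (toR a) (toR b)) (hr : x ∈ unitSquare r) :
    s(a, b) ∈ sqEdgeSyms r := by
  wlog hdir : b = (a.1 + 1, a.2) ∨ b = (a.1, a.2 + 1) generalizing a b
  · have hrev : a = (b.1 + 1, b.2) ∨ a = (b.1, b.2 + 1) := by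
      have := gridGraph_adj_iff.1 hab
      tauto
    rw [openSegment_symm] at hx
    rw [Sym2.eq_swap]
    exact this hab.symm hx hrev
  obtain ⟨a₁, a₂⟩ := a
  obtain ⟨r₁, r₂⟩ := r
  obtain ⟨⟨hr₁, hr₂⟩, hr₃, hr₄⟩ := hr
  rcases hdir with rfl | rfl
  · rw [toR, toR, Int.cast_add, Int.cast_one, ← Prod.image_mk_openSegment_left,
      openSegment_eq_Ioo (lt_add_one _)] at hx
    obtain ⟨s, hs, rfl⟩ := hx
    dsimp only at hs hr₁ hr₂ hr₃ hr₄ ⊢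
    obtain rfl := int_eq_of_mem_Ioo_of_mem_Icc hs ⟨hr₁, hr₂⟩
    rcases int_eq_or_eq_add_one_of_mem_Icc ⟨hr₃, hr₄⟩ with rfl | rfl <;>
      simp [sqEdgeSyms]
  · rw [toR, toR, Int.cast_add, Int.cast_one, ← Prod.image_mk_openSegment_right,
      openSegment_eq_Ioo (lt_add_one _)] at hx
    obtain ⟨s, hs, rfl⟩ := hx
    dsimp only at hs hr₁ hr₂ hr₃ hr₄ ⊢
    obtain rfl := int_eq_of_mem_Ioo_of_mem_Icc hs ⟨hr₃, hr₄⟩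
    rcases int_eq_or_eq_add_one_of_mem_Icc ⟨hr₁, hr₂⟩ with rfl | rfl <;>
      simp [sqEdgeSyms]

lemma exists_edge_mem_sqEdgeSyms_of_mem_cycleSet {v r : ℤ × ℤ} {w : gridGraph.Walk v v}
    {x : ℝ × ℝ} (hx : x ∈ cycleSet w) (hr : x ∈ unitSquare r) (hlat : x ∉ range toR) :
    ∃ e ∈ w.edges, e ∈ sqEdgeSyms r := by
  simp only [cycleSet, mem_iUnion] at hx
  obtain ⟨d, hd, hseg⟩ := hx
  have hopen : x ∈ openSegment ℝ (toR d.fst) (toR d.snd) :=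
    mem_openSegment_of_ne_left_right (fun h => hlat ⟨_, h⟩) (fun h => hlat ⟨_, h⟩) hseg
  exact ⟨d.edge, List.mem_map_of_mem hd, mk_mem_sqEdgeSyms_of_mem_openSegment d.adj hopen hr⟩


lemma notMem_range_toR_of_fst_eq {x : ℝ × ℝ} (n : ℤ) (h : x.1 = n + 2⁻¹) : x ∉ range toR :=
  fun ⟨p, hp⟩ => intCast_add_half_ne_intCast n p.1 (h ▸ congrArg Prod.fst hp).symm

lemma notMem_range_toR_of_snd_eq {x : ℝ × ℝ} (n : ℤ) (h : x.2 = n + 2⁻¹) : x ∉ range toR :=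
  fun ⟨p, hp⟩ => intCast_add_half_ne_intCast n p.2 (h ▸ congrArg Prod.snd hp).symm

lemma exists_notMem_range_toR_of_mem_squareEdgeSets {r : ℤ × ℤ} {S : Set (ℝ × ℝ)}
    (hS : S ∈ squareEdgeSets r) : ∃ x ∈ S, x ∉ range toR := by
  simp only [squareEdgeSets, mem_insert_iff, mem_singleton_iff] at hS
  rcases hS with rfl | rfl | rfl | rfl
  · exact ⟨(r.1 + 2⁻¹, r.2), ⟨⟨by linarith, by linarith⟩, rfl⟩,
      notMem_range_toR_of_fst_eq r.1 rfl⟩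
  · exact ⟨(r.1 + 2⁻¹, r.2 + 1), ⟨⟨by linarith, by linarith⟩, rfl⟩,
      notMem_range_toR_of_fst_eq r.1 rfl⟩
  · exact ⟨(r.1, r.2 + 2⁻¹), ⟨rfl, ⟨by linarith, by linarith⟩⟩,
      notMem_range_toR_of_snd_eq r.2 rfl⟩
  · exact ⟨(r.1 + 1, r.2 + 2⁻¹), ⟨rfl, ⟨by linarith, by linarith⟩⟩,
      notMem_range_toR_of_snd_eq r.2 rfl⟩

lemma subset_unitSquare_of_mem_squareEdgeSets {r : ℤ × ℤ} {S : Set (ℝ × ℝ)}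
    (hS : S ∈ squareEdgeSets r) : S ⊆ unitSquare r := by
  simp only [squareEdgeSets, mem_insert_iff, mem_singleton_iff] at hS
  rcases hS with rfl | rfl | rfl | rfl <;>
    refine prod_mono ?_ ?_ <;> simp

lemma PlusAdj.exists_notMem_range_toR {p q : ℤ × ℤ} (h : PlusAdj p q) :
    ∃ x ∈ unitSquare p ∩ unitSquare q, x ∉ range toR := by
  obtain ⟨-, S, hSp, hSq⟩ := h
  obtain ⟨x, hxS, hx⟩ := exists_notMem_range_toR_of_mem_squareEdgeSets hSp
  exact ⟨x, ⟨subset_unitSquare_of_mem_squareEdgeSets hSp hxS,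
    subset_unitSquare_of_mem_squareEdgeSets hSq hxS⟩, hx⟩

lemma openSquare_subset_unitSquare_diff_range (r : ℤ × ℤ) :
    openSquare r ⊆ unitSquare r \ range toR :=
  fun x hx => ⟨prod_mono Ioo_subset_Icc_self Ioo_subset_Icc_self hx,
    fun ⟨p, hp⟩ => intCast_notMem_Ioo p.1 r.1 (by subst hp; exact hx.1)⟩

lemma closure_openSquare (r : ℤ × ℤ) : closure (openSquare r) = unitSquare r := by
  rw [openSquare, closure_prod_eq, closure_Ioo (lt_add_one _).ne, closure_Ioo (lt_add_one _).ne,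
    unitSquare]

lemma isPreconnected_openSquare (r : ℤ × ℤ) : IsPreconnected (openSquare r) :=
  ((convex_Ioo _ _).prod (convex_Ioo _ _)).isPreconnected

noncomputable def squareCenter (r : ℤ × ℤ) : ℝ × ℝ := ((r.1 : ℝ) + 2⁻¹, (r.2 : ℝ) + 2⁻¹)

lemma squareCenter_mem_openSquare (r : ℤ × ℤ) : squareCenter r ∈ openSquare r :=
  ⟨⟨by simp [squareCenter], by simp [squareCenter]; norm_num⟩,
    ⟨by simp [squareCenter], by simp [squareCenter]; norm_num⟩⟩

section Components

variable {Γ : Set (ℝ × ℝ)}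

lemma connectedComponentIn_eq_of_mem_openSquare {r : ℤ × ℤ} (hr : openSquare r ⊆ Γᶜ)
    {z : ℝ × ℝ} (hz : z ∈ openSquare r) :
    connectedComponentIn Γᶜ z = connectedComponentIn Γᶜ (squareCenter r) :=
  (connectedComponentIn_eq <| (isPreconnected_openSquare r).subset_connectedComponentIn
    (squareCenter_mem_openSquare r) hr hz).symm

lemma squareInInterior_of_isBounded {r : ℤ × ℤ} (hr : openSquare r ⊆ Γᶜ)
    (h : Bornology.IsBounded (connectedComponentIn Γᶜ (squareCenter r))) :
    SquareInInterior Γ r :=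
  fun _ hz => ⟨hr hz, by rwa [connectedComponentIn_eq_of_mem_openSquare hr hz]⟩

lemma squareInExterior_of_not_isBounded {r : ℤ × ℤ} (hr : openSquare r ⊆ Γᶜ)
    (h : ¬ Bornology.IsBounded (connectedComponentIn Γᶜ (squareCenter r))) :
    SquareInExterior Γ r :=
  fun _ hz => ⟨hr hz, by rwa [connectedComponentIn_eq_of_mem_openSquare hr hz]⟩

lemma PlusAdj.connectedComponentIn_squareCenter_eq {p q : ℤ × ℤ} (h : PlusAdj p q)
    (hp : unitSquare p \ range toR ⊆ Γᶜ) (hq : unitSquare q \ range toR ⊆ Γᶜ) :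
    connectedComponentIn Γᶜ (squareCenter p) = connectedComponentIn Γᶜ (squareCenter q) := by
  obtain ⟨x, ⟨hxp, hxq⟩, hx⟩ := h.exists_notMem_range_toR
  have hconn : ∀ r, x ∈ unitSquare r → IsPreconnected (insert x (openSquare r)) := fun r hxr =>
    (isPreconnected_openSquare r).subset_closure (subset_insert x _)
      (insert_subset (closure_openSquare r ▸ hxr) subset_closure)
  have hsub : ∀ r, x ∈ unitSquare r → unitSquare r \ range toR ⊆ Γᶜ →
      insert x (openSquare r) ⊆ Γᶜ := fun r hxr hr =>
    insert_subset (hr ⟨hxr, hx⟩) ((openSquare_subset_unitSquare_diff_range r).trans hr)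
  have hU := ((hconn p hxp).union x (mem_insert x _) (mem_insert x _) (hconn q hxq))
    |>.subset_connectedComponentIn (Or.inl (Or.inr (squareCenter_mem_openSquare p)))
      (union_subset (hsub p hxp hp) (hsub q hxq hq))
  exact connectedComponentIn_eq (hU (Or.inr (Or.inr (squareCenter_mem_openSquare q))))

end Components

lemma Fin.apply_eq_apply_of_forall_succ {α : Type*} {t : ℕ} (f : Fin t → α)
    (h : ∀ (i : ℕ) (hi : i + 1 < t), f ⟨i, Nat.lt_of_succ_lt hi⟩ = f ⟨i + 1, hi⟩) (i j : Fin t) :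
    f i = f j := by
  have key : ∀ (n : ℕ) (hn : n < t), f ⟨n, hn⟩ = f ⟨0, Nat.zero_lt_of_lt hn⟩ := by
    intro n
    induction n with
    | zero => exact fun _ => rfl
    | succ n ih => exact fun hn => (h n hn).symm.trans (ih _)
  exact (key i i.2).trans (key j j.2).symm

theorem occupied_path_cannot_cross_vacant_cycle (occupied : ℤ × ℤ → Prop)
    (v : ℤ × ℤ) (wG : gridGraph.Walk v v)
    (hvac : ∀ e ∈ wG.edges, ∀ q : ℤ × ℤ, e ∈ sqEdgeSyms q → ¬ occupied q)
    (t : ℕ) (J : Fin t → ℤ × ℤ) (hocc : ∀ i, occupied (J i))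
    (hadj : ∀ (i : ℕ) (h : i + 1 < t),
      PlusAdj (J ⟨i, by omega⟩) (J ⟨i + 1, h⟩)) :
    (∀ i, SquareInInterior (cycleSet wG) (J i)) ∨
    (∀ i, SquareInExterior (cycleSet wG) (J i)) := by
  have hoff : ∀ i, unitSquare (J i) \ range toR ⊆ (cycleSet wG)ᶜ := fun i x ⟨hx, hlat⟩ hxΓ => by
    obtain ⟨e, he, heJ⟩ := exists_edge_mem_sqEdgeSyms_of_mem_cycleSet hxΓ hx hlat
    exact hvac e he (J i) heJ (hocc i)
  have hopen i : openSquare (J i) ⊆ (cycleSet wG)ᶜ :=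
    (openSquare_subset_unitSquare_diff_range _).trans (hoff i)
  have hcomp := Fin.apply_eq_apply_of_forall_succ
    (fun i => connectedComponentIn (cycleSet wG)ᶜ (squareCenter (J i)))
    (fun i hi => (hadj i hi).connectedComponentIn_squareCenter_eq (hoff _) (hoff _))
  by_cases hb :
      ∃ i, Bornology.IsBounded (connectedComponentIn (cycleSet wG)ᶜ (squareCenter (J i)))
  · obtain ⟨i, hi⟩ := hb
    exact Or.inl fun j => squareInInterior_of_isBounded (hopen j) (hcomp j i ▸ hi)
  · exact Or.inr fun j => squareInExterior_of_not_isBounded (hopen j) (not_exists.1 hb j)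
end
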